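/- Let Σ be the complete fan in Z^2 with ray generators ±(1,0), ±(0,1), (1,±1), (1,-2), (-1,1), (-2,1) (the surface W_7). Every primitive collection of Σ has degree ≥ 0, i.e., W_7 is a toric weak del Pezzo surface. -/

import Mathlib

/-!
Consecutive generators of the fan form a `ℤ`-basis of `ℤ²` (their determinant is `1`), so by
Cramer's rule the coordinates of `w i + w j` in the basis of a cone are two `2 × 2`
determinants. For each non-adjacent pair it then suffices to exhibit a cone in which both
determinants are nonnegative with sum at most `2`, which is a finite check.
-/

/-- The ray generators of the fan of `W₇`, in counterclockwise order. -/
def w7 : Fin 9 → ℤ × ℤ := ![(1,0),(1,1),(0,1),(-1,1),(-2,1),(-1,0),(0,-1),(1,-2),(1,-1)]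

def det2 (u v : ℤ × ℤ) : ℤ := u.1 * v.2 - u.2 * v.1

theorem eq_det2_smul_add_det2_smul {u w : ℤ × ℤ} (huw : det2 u w = 1) (v : ℤ × ℤ) :
    v = det2 v w • u + det2 u v • w := by
  unfold det2 at *
  ext <;> simp only [Prod.smul_fst, Prod.smul_snd, Prod.fst_add, Prod.snd_add, smul_eq_mul]
  · linear_combination (-v.1) * huw
  · linear_combination (-v.2) * huw

theorem exists_nat_smul_add_of_det2 {u w v : ℤ × ℤ} (huw : det2 u w = 1)
    (ha : 0 ≤ det2 v w) (hb : 0 ≤ det2 u v) (hab : det2 v w + det2 u v ≤ 2) :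
    ∃ a b : ℕ, v = (a : ℤ) • u + (b : ℤ) • w ∧ a + b ≤ 2 := by
  refine ⟨(det2 v w).toNat, (det2 u v).toNat, ?_, by omega⟩
  rw [Int.toNat_of_nonneg ha, Int.toNat_of_nonneg hb]
  exact eq_det2_smul_add_det2_smul huw v

theorem det2_w7_succ : ∀ k : Fin 9, det2 (w7 k) (w7 (k + 1)) = 1 := by
  decide

theorem exists_cone_det2_w7_add : ∀ i j : Fin 9, j ≠ i → j ≠ i + 1 → i ≠ j + 1 →
    ∃ k : Fin 9, 0 ≤ det2 (w7 i + w7 j) (w7 (k + 1)) ∧ 0 ≤ det2 (w7 k) (w7 i + w7 j) ∧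
      det2 (w7 i + w7 j) (w7 (k + 1)) + det2 (w7 k) (w7 i + w7 j) ≤ 2 := by
  decide

/-- Every primitive collection (= non-adjacent pair of rays) of the fan of `W₇`
has degree `≥ 0`: the sum of the pair is a nonnegative combination, with coefficient
sum at most `2`, of the generators of the cone containing it. -/
theorem stmt7 :
    ∀ i j : Fin 9, j ≠ i → j ≠ i + 1 → i ≠ j + 1 →
      ∃ (k : Fin 9) (a b : ℕ),
        w7 i + w7 j = (a : ℤ) • w7 k + (b : ℤ) • w7 (k + 1) ∧ a + b ≤ 2 := by
  intro i j hij hsucc hpred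
  obtain ⟨k, ha, hb, hab⟩ := exists_cone_det2_w7_add i j hij hsucc hpred
  exact ⟨k, exists_nat_smul_add_of_det2 (det2_w7_succ k) ha hb hab⟩
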